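/- arXiv:2211.14974 — 2 statements merged into one kernel-verified Lean document; each statement's English description precedes it below -/
import Mathlib

section
/- Let A be a unital C*-algebra, s₁, s₂ ∈ A isometries with s₁s₁* + s₂s₂* = 1, λ(x) = s₁xs₁* + s₂xs₂*, and (xₙ) a bounded sequence in A. Then ‖xₙsᵢ − sᵢxₙ‖ → 0 and ‖xₙsᵢ* − sᵢ*xₙ‖ → 0 for i = 1,2 if and only if ‖λ(xₙ) − xₙ‖ → 0. -/
open Filter

/-- A bounded sequence in a unital C*-algebra containing Cuntz `O₂` isometries is
asymptotically central for `s₁, s₂` (and their adjoints) iff it is asymptotically fixed by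
the Cuntz endomorphism `λ(x) = s₁xs₁* + s₂xs₂*`. -/
theorem asymptotically_central_iff_lambda_fixed {A : Type*} [CStarAlgebra A]
    (s₁ s₂ : A) (h₁ : star s₁ * s₁ = 1) (h₂ : star s₂ * s₂ = 1)
    (hsum : s₁ * star s₁ + s₂ * star s₂ = 1)
    (x : ℕ → A) (hx : ∃ C : ℝ, ∀ n, ‖x n‖ ≤ C) :
    (Tendsto (fun n => ‖x n * s₁ - s₁ * x n‖) atTop (nhds 0) ∧
     Tendsto (fun n => ‖x n * s₂ - s₂ * x n‖) atTop (nhds 0) ∧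
     Tendsto (fun n => ‖x n * star s₁ - star s₁ * x n‖) atTop (nhds 0) ∧
     Tendsto (fun n => ‖x n * star s₂ - star s₂ * x n‖) atTop (nhds 0)) ↔
    Tendsto (fun n => ‖(s₁ * x n * star s₁ + s₂ * x n * star s₂) - x n‖) atTop (nhds 0) := by
  clear hx
  have hs1 : ‖s₁‖ ≤ 1 := by
    have h := CStarRing.norm_star_mul_self (x := s₁)
    rw [h₁] at h
    have h1 : ‖(1 : A)‖ ≤ 1 := by
      have h0 := CStarRing.norm_star_mul_self (x := (1 : A))
      simp only [star_one, one_mul] at h0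
      nlinarith [norm_nonneg (1 : A)]
    nlinarith [norm_nonneg s₁]
  have hs2 : ‖s₂‖ ≤ 1 := by
    have h := CStarRing.norm_star_mul_self (x := s₂)
    rw [h₂] at h
    have h1 : ‖(1 : A)‖ ≤ 1 := by
      have h0 := CStarRing.norm_star_mul_self (x := (1 : A))
      simp only [star_one, one_mul] at h0
      nlinarith [norm_nonneg (1 : A)]
    nlinarith [norm_nonneg s₂]
  have hs1' : ‖star s₁‖ ≤ 1 := by rw [norm_star]; exact hs1
  have hs2' : ‖star s₂‖ ≤ 1 := by rw [norm_star]; exact hs2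
  -- orthogonality of ranges
  have horth : star s₁ * s₂ = 0 := by
    have e2 : star s₁ * s₂ + star s₁ * s₂ = star s₁ * s₂ := by
      calc star s₁ * s₂ + star s₁ * s₂
          = (star s₁ * s₁) * (star s₁ * s₂) + (star s₁ * s₂) * (star s₂ * s₂) := by
            rw [h₁, h₂, one_mul, mul_one]
        _ = star s₁ * ((s₁ * star s₁ + s₂ * star s₂) * s₂) := by noncomm_ring
        _ = star s₁ * s₂ := by rw [hsum, one_mul]
    rwa [add_eq_left] at e2
  have horth' : star s₂ * s₁ = 0 := by
    have := congrArg star horth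
    simpa [star_mul] using this
  constructor
  · rintro ⟨ha, hb, -, -⟩
    have key : ∀ y : A, (s₁ * y * star s₁ + s₂ * y * star s₂) - y
        = (s₁ * y - y * s₁) * star s₁ + (s₂ * y - y * s₂) * star s₂ := by
      intro y
      have hy : y = y * (s₁ * star s₁ + s₂ * star s₂) := by rw [hsum, mul_one]
      nth_rewrite 3 [hy]
      noncomm_ring
    refine squeeze_zero (fun n => norm_nonneg _)
      (g := fun n => ‖x n * s₁ - s₁ * x n‖ + ‖x n * s₂ - s₂ * x n‖) (fun n => ?_)
      (by simpa using ha.add hb)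
    rw [key (x n)]
    calc ‖(s₁ * x n - x n * s₁) * star s₁ + (s₂ * x n - x n * s₂) * star s₂‖
        ≤ ‖(s₁ * x n - x n * s₁) * star s₁‖ + ‖(s₂ * x n - x n * s₂) * star s₂‖ :=
          norm_add_le _ _
      _ ≤ ‖s₁ * x n - x n * s₁‖ * ‖star s₁‖ + ‖s₂ * x n - x n * s₂‖ * ‖star s₂‖ :=
          add_le_add (norm_mul_le _ _) (norm_mul_le _ _)
      _ ≤ ‖x n * s₁ - s₁ * x n‖ + ‖x n * s₂ - s₂ * x n‖ := by
          rw [norm_sub_rev (s₁ * x n), norm_sub_rev (s₂ * x n)]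
          have h1 := norm_nonneg (x n * s₁ - s₁ * x n)
          have h2 := norm_nonneg (x n * s₂ - s₂ * x n)
          nlinarith
  · intro h
    have e1 : ∀ y : A, ((s₁ * y * star s₁ + s₂ * y * star s₂) - y) * s₁ = s₁ * y - y * s₁ := by
      intro y
      have e : (s₁ * y * star s₁ + s₂ * y * star s₂) * s₁
          = s₁ * y * (star s₁ * s₁) + s₂ * y * (star s₂ * s₁) := by noncomm_ring
      rw [sub_mul, e, h₁, horth', mul_one, mul_zero, add_zero]
    have e2 : ∀ y : A, ((s₁ * y * star s₁ + s₂ * y * star s₂) - y) * s₂ = s₂ * y - y * s₂ := by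
      intro y
      have e : (s₁ * y * star s₁ + s₂ * y * star s₂) * s₂
          = s₁ * y * (star s₁ * s₂) + s₂ * y * (star s₂ * s₂) := by noncomm_ring
      rw [sub_mul, e, h₂, horth, mul_one, mul_zero, zero_add]
    have e3 : ∀ y : A, star s₁ * ((s₁ * y * star s₁ + s₂ * y * star s₂) - y)
        = y * star s₁ - star s₁ * y := by
      intro y
      have e : star s₁ * (s₁ * y * star s₁ + s₂ * y * star s₂)
          = (star s₁ * s₁) * (y * star s₁) + (star s₁ * s₂) * (y * star s₂) := by noncomm_ring
      rw [mul_sub, e, h₁, horth, one_mul, zero_mul, add_zero]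
    have e4 : ∀ y : A, star s₂ * ((s₁ * y * star s₁ + s₂ * y * star s₂) - y)
        = y * star s₂ - star s₂ * y := by
      intro y
      have e : star s₂ * (s₁ * y * star s₁ + s₂ * y * star s₂)
          = (star s₂ * s₁) * (y * star s₁) + (star s₂ * s₂) * (y * star s₂) := by noncomm_ring
      rw [mul_sub, e, h₂, horth', one_mul, zero_mul, zero_add]
    refine ⟨?_, ?_, ?_, ?_⟩
    · refine squeeze_zero (fun n => norm_nonneg _) (fun n => ?_) h
      rw [norm_sub_rev, ← e1 (x n)]
      refine le_trans (norm_mul_le _ _) ?_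
      nlinarith [norm_nonneg ((s₁ * x n * star s₁ + s₂ * x n * star s₂) - x n)]
    · refine squeeze_zero (fun n => norm_nonneg _) (fun n => ?_) h
      rw [norm_sub_rev, ← e2 (x n)]
      refine le_trans (norm_mul_le _ _) ?_
      nlinarith [norm_nonneg ((s₁ * x n * star s₁ + s₂ * x n * star s₂) - x n)]
    · refine squeeze_zero (fun n => norm_nonneg _) (fun n => ?_) h
      rw [← e3 (x n)]
      refine le_trans (norm_mul_le _ _) ?_
      nlinarith [norm_nonneg ((s₁ * x n * star s₁ + s₂ * x n * star s₂) - x n)]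
    · refine squeeze_zero (fun n => norm_nonneg _) (fun n => ?_) h
      rw [← e4 (x n)]
      refine le_trans (norm_mul_le _ _) ?_
      nlinarith [norm_nonneg ((s₁ * x n * star s₁ + s₂ * x n * star s₂) - x n)]
end

section
/- Let q be a prime and p an integer. Then q divides p^q − p; moreover, for the integer c = (p^q − p)/q, the abelian group G = colim(ℤ^q → ℤ^q → ⋯) with all connecting maps given by the matrix M = p·I + c·J is p-divisible, i.e., for every x ∈ G there exists y ∈ G with p·y = x. -/
/-- For `q` prime and `p ≥ 1`: `q` divides `p^q − p` (Fermat), and for `c = (p^q − p)/q`,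
the direct limit `colim(ℤ^q → ℤ^q → ⋯)` along the matrix `M = p·I + c·J` is `p`-divisible.
An element of the colimit is represented by a vector `x ∈ ℤ^q` at some stage, and it is
divisible by `p` in the colimit precisely when some iterate `M^k·x` lies in `p·ℤ^q`. -/
theorem direct_limit_p_divisible (p q : ℕ) (hp : 1 ≤ p) (hq : Nat.Prime q) :
    (q : ℤ) ∣ (p : ℤ) ^ q - (p : ℤ) ∧
    ∀ c : ℤ, (q : ℤ) * c = (p : ℤ) ^ q - (p : ℤ) →
      ∀ x : Fin q → ℤ, ∃ (k : ℕ) (y : Fin q → ℤ),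
        (((p : ℤ) • (1 : Matrix (Fin q) (Fin q) ℤ)
            + c • (Matrix.of fun _ _ => (1 : ℤ))) ^ k).mulVec x = (p : ℤ) • y := by
  haveI : Fact q.Prime := ⟨hq⟩
  constructor
  · have h : (((p : ℤ) ^ q - (p : ℤ) : ℤ) : ZMod q) = 0 := by
      push_cast
      rw [ZMod.pow_card]
      ring
    exact (ZMod.intCast_zmod_eq_zero_iff_dvd _ _).mp h
  · intro c hc x
    set J : Matrix (Fin q) (Fin q) ℤ := Matrix.of fun _ _ => (1 : ℤ) with hJ
    set M : Matrix (Fin q) (Fin q) ℤ := (p : ℤ) • 1 + c • J with hM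
    have hJJ : J * J = (q : ℤ) • J := by
      ext i j
      simp [hJ, Matrix.mul_apply]
    set N : Matrix (Fin q) (Fin q) ℤ :=
      (p : ℤ) • 1 + (c * ((p : ℤ) ^ (q - 1) + 1)) • J with hN
    have key : M ^ 2 = (p : ℤ) • N := by
      have hq1 : q - 1 + 1 = q := Nat.succ_pred_eq_of_pos hq.pos
      have hcoef : (p : ℤ) * c + c * (p : ℤ) + c * (c * (q : ℤ)) =
          (p : ℤ) * (c * ((p : ℤ) ^ (q - 1) + 1)) := by
        have hpq : (p : ℤ) ^ q = (p : ℤ) ^ (q - 1) * (p : ℤ) := by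
          rw [← pow_succ, hq1]
        have hc' : (q : ℤ) * c = (p : ℤ) ^ (q - 1) * (p : ℤ) - (p : ℤ) := by
          rw [hc, hpq]
        linear_combination c * hc'
      rw [sq, hM, hN]
      simp only [add_mul, mul_add, Matrix.smul_mul, Matrix.mul_smul, one_mul, mul_one, hJJ,
        smul_smul, smul_add]
      match_scalars
      · ring
      · linear_combination hcoef
    refine ⟨2, N.mulVec x, ?_⟩
    rw [key, Matrix.smul_mulVec]
end
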